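/- If φ avoids Ω, then the space Z²_1 of 2-cocycles on F_φ of degree 1 has dimension 2(p−1); explicitly, it is spanned by the cochains ψ^1_{2,j} (3 ≤ j ≤ 2p) determined by ψ^1_{2,j}(X_2, X_j) = X_1 and ψ^1_{2,j} = 0 on all other pairs of basis vectors. -/

import Mathlib

open scoped BigOperators

noncomputable section

/-- The underlying space ℂ^{2p} of the Lie algebra `F_φ`. -/
abbrev V (p : ℕ) : Type := Fin (2*p) → ℂ

/-- The space of bilinear maps ℂ^{2p} × ℂ^{2p} → ℂ^{2p}. -/
abbrev Bil (p : ℕ) : Type := V p →ₗ[ℂ] V p →ₗ[ℂ] V p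

/-- The basis vector `X j` (1-indexed, j = 1, …, 2p). -/
def X (p j : ℕ) : V p := fun i => if (i : ℕ) + 1 = j then 1 else 0

/-- The coordinate functional dual to `X j` (1-indexed). -/
def coordL (p j : ℕ) : V p →ₗ[ℂ] ℂ :=
  if h : j - 1 < 2*p then LinearMap.proj (⟨j - 1, h⟩ : Fin (2*p)) else 0

/-- The elementary alternating bilinear map `(x,y) ↦ (x_a y_b − x_b y_a) • v`
(indices 1-based). -/
def elem (p a b : ℕ) (v : V p) : Bil p :=
  (coordL p a).smulRight ((coordL p b).smulRight v)
    - (coordL p b).smulRight ((coordL p a).smulRight v)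

/-- The Lie bracket of the frobeniusian model algebra `F_φ`:
`[X_1,X_2] = −X_1`, `[X_{2k+1},X_{2k+2}] = −X_1`, `[X_2,X_{2k+1}] = −φ_k X_{2k+1}`,
`[X_2,X_{2k+2}] = (1+φ_k) X_{2k+2}` for `1 ≤ k ≤ p−1`. -/
def mu (p : ℕ) (φ : ℕ → ℂ) : Bil p :=
  elem p 1 2 (-(X p 1)) +
    ∑ k ∈ Finset.Icc 1 (p-1),
      (elem p (2*k+1) (2*k+2) (-(X p 1)) + elem p 2 (2*k+1) (-(φ k) • X p (2*k+1))
        + elem p 2 (2*k+2) ((1 + φ k) • X p (2*k+2)))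

/-- `φ` avoids the set `Ω₁`. -/
def AvoidsOmega1 (p : ℕ) (φ : ℕ → ℂ) : Prop :=
  ∀ i j : ℕ, 1 ≤ i → i ≤ p - 1 → 1 ≤ j → j ≤ p - 1 →
    1 + φ i + φ j ≠ 0 ∧ 2 + φ i + φ j ≠ 0 ∧ (i ≠ j → φ i ≠ φ j) ∧
      φ i ≠ 0 ∧ φ i ≠ -1 ∧ 2 * φ i + 1 ≠ 0

/-- `φ` avoids the set `Ω = Ω₁ ∪ Ω₂`. -/
def AvoidsOmega (p : ℕ) (φ : ℕ → ℂ) : Prop :=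
  AvoidsOmega1 p φ ∧
    ∀ i j : ℕ, 1 ≤ i → i ≤ p - 1 → 1 ≤ j → j ≤ p - 1 →
      (i ≠ j → 1 + φ i - φ j ≠ 0) ∧ φ i + φ j ≠ 0 ∧ 2 + φ i ≠ 0 ∧ 1 - φ i ≠ 0 ∧
        1 + 2*φ i - φ j ≠ 0 ∧ 1 + 2*φ i + φ j ≠ 0 ∧ 2*φ i - φ j ≠ 0 ∧ 2 + 2*φ i + φ j ≠ 0

/-- The space of derivations of a bilinear bracket `B` on `ℂ^{2p}`. -/
def derSub (p : ℕ) (B : Bil p) : Submodule ℂ (V p →ₗ[ℂ] V p) where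
  carrier := {D | ∀ x y, D (B x y) = B (D x) y + B x (D y)}
  add_mem' := by
    intro D E hD hE x y
    simp only [LinearMap.add_apply, hD x y, hE x y, map_add, LinearMap.add_apply]
    abel
  zero_mem' := by intro x y; simp
  smul_mem' := by
    intro c D hD x y
    simp only [LinearMap.smul_apply, hD x y, map_smul, LinearMap.map_smul₂,
      LinearMap.smul_apply, smul_add]

/-- The grading subspaces: `g_0 = ℂ X_2`, `g_1 = ⟨X_3,…,X_{2p}⟩`, `g_2 = ℂ X_1`,
and `g_m = 0` otherwise. -/
def gr (p : ℕ) : ℤ → Submodule ℂ (V p) := fun m =>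
  if m = 0 then Submodule.span ℂ {X p 2}
  else if m = 1 then Submodule.span ℂ {v | ∃ j, 3 ≤ j ∧ j ≤ 2*p ∧ v = X p j}
  else if m = 2 then Submodule.span ℂ {X p 1}
  else ⊥

/-- The space of 2-cocycles of `F_φ` with coefficients in the adjoint module
(2-cochains are alternating bilinear maps). -/
def Z2 (p : ℕ) (φ : ℕ → ℂ) : Submodule ℂ (Bil p) where
  carrier := {ψ | (∀ x, ψ x x = 0) ∧
    ∀ x y z, mu p φ x (ψ y z) - mu p φ y (ψ x z) + mu p φ z (ψ x y)
      - ψ (mu p φ x y) z + ψ (mu p φ x z) y - ψ (mu p φ y z) x = 0}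
  add_mem' := by
    rintro ψ₁ ψ₂ ⟨h₁a, h₁c⟩ ⟨h₂a, h₂c⟩
    constructor
    · intro x; simp [h₁a x, h₂a x]
    · intro x y z
      have e₁ := h₁c x y z
      have e₂ := h₂c x y z
      simp only [LinearMap.add_apply, map_add]
      rw [← sub_eq_zero] at *
      simp only [sub_zero] at *
      linear_combination (norm := module) e₁ + e₂
  zero_mem' := by
    constructor
    · intro x; simp
    · intro x y z; simp
  smul_mem' := by
    rintro c ψ ⟨ha, hc⟩
    constructor
    · intro x; simp [ha x]
    · intro x y z
      have e := hc x y z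
      simp only [LinearMap.smul_apply, map_smul]
      linear_combination (norm := module) c • e

/-- The space of 2-coboundaries of `F_φ` with coefficients in the adjoint module. -/
def B2 (p : ℕ) (φ : ℕ → ℂ) : Submodule ℂ (Bil p) where
  carrier := {ψ | ∃ f : V p →ₗ[ℂ] V p,
    ∀ x y, ψ x y = mu p φ x (f y) - mu p φ y (f x) - f (mu p φ x y)}
  add_mem' := by
    rintro ψ₁ ψ₂ ⟨f₁, h₁⟩ ⟨f₂, h₂⟩
    refine ⟨f₁ + f₂, fun x y => ?_⟩
    simp only [LinearMap.add_apply, h₁ x y, h₂ x y, map_add]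
    abel
  zero_mem' := ⟨0, by intro x y; simp⟩
  smul_mem' := by
    rintro c ψ ⟨f, h⟩
    refine ⟨c • f, fun x y => ?_⟩
    simp only [LinearMap.smul_apply, h x y, map_smul, smul_sub]

/-- The 2-cochains of degree `k` with respect to the grading `gr`. -/
def degSub (p : ℕ) (k : ℤ) : Submodule ℂ (Bil p) where
  carrier := {ψ | ∀ (a b : ℤ), ∀ x ∈ gr p a, ∀ y ∈ gr p b, ψ x y ∈ gr p (a + b + k)}
  add_mem' := by
    intro ψ₁ ψ₂ h₁ h₂ a b x hx y hy
    simpa using Submodule.add_mem _ (h₁ a b x hx y hy) (h₂ a b x hx y hy)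
  zero_mem' := by intro a b x hx y hy; simp
  smul_mem' := by
    intro c ψ h a b x hx y hy
    simpa using Submodule.smul_mem _ c (h a b x hx y hy)

attribute [local instance] LieRing.ofAssociativeRing

/-- The derivations of `F_φ` as a Lie subalgebra of `End(ℂ^{2p})`. -/
def derLie (p : ℕ) (φ : ℕ → ℂ) : LieSubalgebra ℂ (Module.End ℂ (V p)) :=
  { derSub p (mu p φ) with
    lie_mem' := by
      intro D E hD hE
      have hD' : ∀ x y, D (mu p φ x y) = mu p φ (D x) y + mu p φ x (D y) := hD
      have hE' : ∀ x y, E (mu p φ x y) = mu p φ (E x) y + mu p φ x (E y) := hE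
      intro x y
      simp only [Ring.lie_def, LinearMap.sub_apply, Module.End.mul_apply]
      rw [hE' x y, hD' x y, map_add, map_add, hD' (E x) y, hD' x (E y),
        hE' (D x) y, hE' x (D y)]
      simp only [map_sub, LinearMap.sub_apply]
      abel }

/-- The derivation `f_i` of `F_φ` : `f_i(X_{2i+1}) = X_{2i+1}`, `f_i(X_{2i+2}) = −X_{2i+2}`. -/
def fDer (p i : ℕ) : V p →ₗ[ℂ] V p :=
  (coordL p (2*i+1)).smulRight (X p (2*i+1)) - (coordL p (2*i+2)).smulRight (X p (2*i+2))

/-- The 2-cocycle `ψ_k = ψ^{2k+1}_{2,2k+1}` :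
`(X_2,X_{2k+1}) ↦ X_{2k+1}`, `(X_2,X_{2k+2}) ↦ −X_{2k+2}`. -/
def psiK (p k : ℕ) : Bil p :=
  elem p 2 (2*k+1) (X p (2*k+1)) - elem p 2 (2*k+2) (X p (2*k+2))

/-- The 2-cocycle `ψ^2_{12}` spanning `Z²_{−2}`. -/
def psiM2 (p : ℕ) (φ : ℕ → ℂ) : Bil p :=
  elem p 1 2 (X p 2) +
    ∑ k ∈ Finset.Icc 1 (p-1),
      (elem p (2*k+1) (2*k+2) (X p 2) + elem p 1 (2*k+1) (-(φ k) • X p (2*k+1))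
        + elem p 1 (2*k+2) ((1 + φ k) • X p (2*k+2)))

/-- The 2-cocycle `ψ^1_{2,j}` : `(X_2,X_j) ↦ X_1`. -/
def psiTop (p j : ℕ) : Bil p := elem p 2 j (X p 1)


/-! ### Plain-function versions of the relevant spaces.
We realise spaces of (multi)linear maps as submodules of plain function spaces,
the (bi)linearity being part of the defining conditions. -/

/-- `ψ : ℂ^{2p} × ℂ^{2p} → ℂ^{2p}` is bilinear. -/
def IsBil (p : ℕ) (ψ : V p → V p → V p) : Prop :=
  (∀ x x' y, ψ (x + x') y = ψ x y + ψ x' y) ∧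
  (∀ (c : ℂ) (x y), ψ (c • x) y = c • ψ x y) ∧
  (∀ x y y', ψ x (y + y') = ψ x y + ψ x y') ∧
  (∀ (c : ℂ) (x y), ψ x (c • y) = c • ψ x y)

/-- The space of derivations of a bilinear bracket `B` on `ℂ^{2p}`, realised inside
the space of all maps `ℂ^{2p} → ℂ^{2p}` (linearity is part of the conditions). -/
def derF (p : ℕ) (B : Bil p) : Submodule ℂ (V p → V p) where
  carrier := {D | (∀ x y, D (x + y) = D x + D y) ∧ (∀ (c : ℂ) (x), D (c • x) = c • D x) ∧
    ∀ x y, D (B x y) = B (D x) y + B x (D y)}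
  add_mem' := by
    rintro D E ⟨hDa, hDs, hDd⟩ ⟨hEa, hEs, hEd⟩
    refine ⟨fun x y => ?_, fun c x => ?_, fun x y => ?_⟩
    · simp only [Pi.add_apply, hDa, hEa]; abel
    · simp only [Pi.add_apply, hDs, hEs, smul_add]
    · simp only [Pi.add_apply, hDd x y, hEd x y, map_add, LinearMap.add_apply]; abel
  zero_mem' := by
    refine ⟨fun x y => ?_, fun c x => ?_, fun x y => ?_⟩ <;> simp
  smul_mem' := by
    rintro c D ⟨hDa, hDs, hDd⟩
    refine ⟨fun x y => ?_, fun c' x => ?_, fun x y => ?_⟩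
    · simp only [Pi.smul_apply, hDa, smul_add]
    · simp only [Pi.smul_apply, hDs, smul_comm c c']
    · simp only [Pi.smul_apply, hDd x y, map_smul, LinearMap.smul_apply, smul_add]

/-- The space of inner derivations `ad(v) = B(v,·)` of a bilinear bracket `B`. -/
def innerF (p : ℕ) (B : Bil p) : Submodule ℂ (V p → V p) where
  carrier := {D | ∃ v, D = fun y => B v y}
  add_mem' := by
    rintro D E ⟨v, rfl⟩ ⟨w, rfl⟩
    exact ⟨v + w, by funext y; simp [map_add]⟩
  zero_mem' := ⟨0, by funext y; simp⟩
  smul_mem' := by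
    rintro c D ⟨v, rfl⟩
    exact ⟨c • v, by funext y; simp [map_smul]⟩

/-- The space of 2-cocycles of `F_φ` with coefficients in the adjoint module;
2-cochains are alternating bilinear maps `ℂ^{2p} × ℂ^{2p} → ℂ^{2p}`. -/
def Z2F (p : ℕ) (φ : ℕ → ℂ) : Submodule ℂ (V p → V p → V p) where
  carrier := {ψ | IsBil p ψ ∧ (∀ x, ψ x x = 0) ∧
    ∀ x y z, mu p φ x (ψ y z) - mu p φ y (ψ x z) + mu p φ z (ψ x y)
      - ψ (mu p φ x y) z + ψ (mu p φ x z) y - ψ (mu p φ y z) x = 0}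
  add_mem' := by
    rintro ψ₁ ψ₂ ⟨⟨hb₁, hb₂, hb₃, hb₄⟩, ha, hc⟩ ⟨⟨hb₁', hb₂', hb₃', hb₄'⟩, ha', hc'⟩
    refine ⟨⟨fun x x' y => ?_, fun c x y => ?_, fun x y y' => ?_, fun c x y => ?_⟩,
      fun x => ?_, fun x y z => ?_⟩
    · simp only [Pi.add_apply, hb₁, hb₁']; abel
    · simp only [Pi.add_apply, hb₂, hb₂', smul_add]
    · simp only [Pi.add_apply, hb₃, hb₃']; abel
    · simp only [Pi.add_apply, hb₄, hb₄', smul_add]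
    · simp only [Pi.add_apply, ha x, ha' x]; abel
    · have e := hc x y z
      have e' := hc' x y z
      simp only [Pi.add_apply, map_add]
      linear_combination (norm := module) e + e'
  zero_mem' := by
    refine ⟨⟨fun x x' y => ?_, fun c x y => ?_, fun x y y' => ?_, fun c x y => ?_⟩,
      fun x => ?_, fun x y z => ?_⟩ <;> simp
  smul_mem' := by
    rintro c ψ ⟨⟨hb₁, hb₂, hb₃, hb₄⟩, ha, hc⟩
    refine ⟨⟨fun x x' y => ?_, fun c' x y => ?_, fun x y y' => ?_, fun c' x y => ?_⟩,
      fun x => ?_, fun x y z => ?_⟩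
    · simp only [Pi.smul_apply, hb₁, smul_add]
    · simp only [Pi.smul_apply, hb₂, smul_comm c c']
    · simp only [Pi.smul_apply, hb₃, smul_add]
    · simp only [Pi.smul_apply, hb₄, smul_comm c c']
    · simp only [Pi.smul_apply, ha x, smul_zero]
    · have e := hc x y z
      simp only [Pi.smul_apply, map_smul]
      linear_combination (norm := module) c • e

/-- The space of 2-coboundaries of `F_φ` with coefficients in the adjoint module. -/
def B2F (p : ℕ) (φ : ℕ → ℂ) : Submodule ℂ (V p → V p → V p) where
  carrier := {ψ | ∃ f : V p →ₗ[ℂ] V p,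
    ∀ x y, ψ x y = mu p φ x (f y) - mu p φ y (f x) - f (mu p φ x y)}
  add_mem' := by
    rintro ψ₁ ψ₂ ⟨f₁, h₁⟩ ⟨f₂, h₂⟩
    refine ⟨f₁ + f₂, fun x y => ?_⟩
    simp only [Pi.add_apply, h₁ x y, h₂ x y, map_add, LinearMap.add_apply]
    abel
  zero_mem' := ⟨0, by intro x y; simp⟩
  smul_mem' := by
    rintro c ψ ⟨f, h⟩
    refine ⟨c • f, fun x y => ?_⟩
    simp only [Pi.smul_apply, h x y, map_smul, LinearMap.smul_apply, smul_sub]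

/-- The 2-cochains of degree `k` with respect to the grading `gr`. -/
def degF (p : ℕ) (k : ℤ) : Submodule ℂ (V p → V p → V p) where
  carrier := {ψ | ∀ (a b : ℤ), ∀ x ∈ gr p a, ∀ y ∈ gr p b, ψ x y ∈ gr p (a + b + k)}
  add_mem' := by
    intro ψ₁ ψ₂ h₁ h₂ a b x hx y hy
    simpa using Submodule.add_mem _ (h₁ a b x hx y hy) (h₂ a b x hx y hy)
  zero_mem' := by intro a b x hx y hy; simp
  smul_mem' := by
    intro c ψ h a b x hx y hy
    simpa using Submodule.smul_mem _ c (h a b x hx y hy)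

/-- A bilinear map, viewed as a plain function. -/
def toF (p : ℕ) (B : Bil p) : V p → V p → V p := fun x y => B x y
/-! A cochain of degree 1 maps `g_0 × g_1` into `g_2 = ℂ X_1` and vanishes on every other pair
of graded pieces: the target `g_m` is zero for `m ≥ 3`, and alternation kills `g_0 × g_0`.
Hence the degree-1 cochains are exactly the span of the `ψ^1_{2,j}`, which are independent
since `ψ^1_{2,j}(X_2, X_k) = δ_{jk} X_1`. Each `ψ^1_{2,j}` is a cocycle for every `φ`: as
`[x, X_1] = x_2 X_1`, `[F_φ, F_φ]` has no `X_2`-component and `X_j` is an eigenvector of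
`ad X_2`, the cocycle identity is a multiple of `x_2 ω(y,z) - y_2 ω(x,z) + z_2 ω(x,y)` with
`ω = X_2^* ∧ X_j^*`, and this vanishes because `ω ∧ X_2^* = 0`. -/

lemma coordL_X {p a m : ℕ} (ha : 1 ≤ a) (hap : a ≤ 2 * p) :
    coordL p a (X p m) = if a = m then 1 else 0 := by
  simp only [coordL, dif_pos (show a - 1 < 2 * p by omega), LinearMap.proj_apply, X]
  congr 1
  simp only [eq_iff_iff]
  omega

lemma coordL_X_of_ne {p a m : ℕ} (ha : 1 ≤ a) (h : a ≠ m) : coordL p a (X p m) = 0 := by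
  unfold coordL
  split_ifs
  · exact if_neg (show a - 1 + 1 ≠ m by omega)
  · rfl

lemma X_eq_single {p : ℕ} (i : Fin (2 * p)) : X p (i + 1) = Pi.single i 1 := by
  ext k
  simp [X, Pi.single_apply, Fin.ext_iff]

lemma elem_apply {p a b : ℕ} (v x y : V p) :
    elem p a b v x y = (coordL p a x * coordL p b y - coordL p b x * coordL p a y) • v := by
  simp [elem, sub_smul, mul_smul]

lemma elem_apply_self {p a b : ℕ} (v x : V p) : elem p a b v x x = 0 := by
  simp [elem_apply, mul_comm]

lemma isBil_toF {p : ℕ} (B : Bil p) : IsBil p (toF p B) := by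
  refine ⟨fun x x' y => ?_, fun c x y => ?_, fun x y y' => ?_, fun c x y => ?_⟩ <;> simp [toF]

lemma IsBil.apply_swap {p : ℕ} {ψ : V p → V p → V p} (hψ : IsBil p ψ)
    (halt : ∀ x, ψ x x = 0) (x y : V p) : ψ y x = -ψ x y := by
  have h := halt (x + y)
  rw [hψ.1, hψ.2.2.1, hψ.2.2.1, halt x, halt y, zero_add, add_zero] at h
  exact eq_neg_of_add_eq_zero_right h

lemma mu_apply_X_one {p : ℕ} (hp : 1 ≤ p) (φ : ℕ → ℂ) (x : V p) :
    mu p φ x (X p 1) = coordL p 2 x • X p 1 := by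
  rw [mu, LinearMap.add_apply, LinearMap.add_apply, LinearMap.sum_apply, LinearMap.sum_apply,
    Finset.sum_eq_zero fun k hk => ?_]
  · simp (disch := omega) [elem_apply, coordL_X_of_ne, coordL_X (a := 1)]
  · simp only [Finset.mem_Icc] at hk
    simp (disch := omega) [elem_apply, coordL_X_of_ne]

lemma coordL_two_mu {p : ℕ} (φ : ℕ → ℂ) (x y : V p) : coordL p 2 (mu p φ x y) = 0 := by
  rw [mu, LinearMap.add_apply, LinearMap.add_apply, LinearMap.sum_apply, LinearMap.sum_apply,
    map_add, map_sum, Finset.sum_eq_zero fun k hk => ?_]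
  · simp (disch := omega) [elem_apply, coordL_X_of_ne]
  · simp only [Finset.mem_Icc] at hk
    simp (disch := omega) [elem_apply, coordL_X_of_ne]

lemma exists_coordL_mu_eq {p j : ℕ} (hj : 3 ≤ j) (φ : ℕ → ℂ) : ∃ c : ℂ, ∀ x y : V p,
    coordL p j (mu p φ x y) = c * (coordL p 2 x * coordL p j y - coordL p j x * coordL p 2 y) := by
  rcases Nat.lt_or_ge (2 * p) j with hjp | hjp
  · exact ⟨0, fun x y => by simp [coordL, show ¬ j - 1 < 2 * p by omega]⟩
  obtain ⟨k, hk⟩ : ∃ k, j = 2 * k + 1 ∨ j = 2 * k + 2 := ⟨(j - 1) / 2, by omega⟩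
  refine ⟨if j = 2 * k + 1 then -φ k else 1 + φ k, fun x y => ?_⟩
  rw [mu, LinearMap.add_apply, LinearMap.add_apply, LinearMap.sum_apply, LinearMap.sum_apply,
    map_add, map_sum, Finset.sum_eq_single k fun k' hk' hne => ?_]
  · have hk0 : k ≠ 0 := by omega
    rcases hk with rfl | rfl <;> simp [elem_apply, coordL_X (a := _) (by omega) hjp, hk0] <;> ring
  · exact fun h => (h (Finset.mem_Icc.mpr ⟨by omega, by omega⟩)).elim
  · simp only [Finset.mem_Icc] at hk'
    simp (disch := omega) [elem_apply, coordL_X_of_ne]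

lemma psiTop_mem_Z2F {p j : ℕ} (φ : ℕ → ℂ) (hj : 3 ≤ j) (hjp : j ≤ 2 * p) :
    toF p (psiTop p j) ∈ Z2F p φ := by
  refine ⟨isBil_toF _, fun x => elem_apply_self _ x, fun x y z => ?_⟩
  obtain ⟨c, hc⟩ := exists_coordL_mu_eq (p := p) hj φ
  simp only [toF, psiTop, elem_apply, map_smul, mu_apply_X_one (by omega : 1 ≤ p),
    coordL_two_mu, hc]
  module

def basisDeg (j : ℕ) : ℤ := if j = 1 then 2 else if j = 2 then 0 else 1

lemma basisDeg_of_three_le {j : ℕ} (hj : 3 ≤ j) : basisDeg j = 1 := by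
  rw [basisDeg, if_neg (by omega), if_neg (by omega)]

lemma X_mem_gr_basisDeg {p j : ℕ} (hj : 1 ≤ j) (hjp : j ≤ 2 * p) :
    X p j ∈ gr p (basisDeg j) := by
  unfold basisDeg
  split_ifs with h₁ h₂
  · subst h₁
    simp [gr, Submodule.mem_span_singleton_self]
  · subst h₂
    simp [gr, Submodule.mem_span_singleton_self]
  · simp only [gr, one_ne_zero, if_false, if_true]
    exact Submodule.subset_span ⟨j, by omega, hjp, rfl⟩

lemma gr_eq_bot {p : ℕ} {m : ℤ} (h0 : m ≠ 0) (h1 : m ≠ 1) (h2 : m ≠ 2) : gr p m = ⊥ := by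
  simp [gr, h0, h1, h2]

lemma coordL_eq_zero_of_mem_gr {p m : ℕ} {a : ℤ} {x : V p} (hm : 1 ≤ m) (hx : x ∈ gr p a)
    (ha : a ≠ basisDeg m) : coordL p m x = 0 := by
  suffices gr p a ≤ LinearMap.ker (coordL p m) from this hx
  unfold gr
  split_ifs
  all_goals try rw [Submodule.span_singleton_le_iff_mem]
  · simp [coordL_X_of_ne hm (show m ≠ 2 by rintro rfl; simp_all [basisDeg])]
  · rw [Submodule.span_le]
    rintro _ ⟨j, hj, -, rfl⟩
    exact coordL_X_of_ne hm (by rintro rfl; simp_all [basisDeg]; omega)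
  · simp [coordL_X_of_ne hm (show m ≠ 1 by rintro rfl; simp_all [basisDeg])]
  · exact bot_le

lemma psiTop_mem_degF {p j : ℕ} (hj : 3 ≤ j) : toF p (psiTop p j) ∈ degF p 1 := by
  intro a b x hx y hy
  simp only [toF, psiTop, elem_apply]
  by_cases hab : a = 0 ∧ b = 1 ∨ a = 1 ∧ b = 0
  · rw [show a + b + 1 = 2 by omega]
    simp only [gr, OfNat.ofNat_ne_zero, OfNat.ofNat_ne_one, if_false, if_true]
    exact Submodule.smul_mem _ _ (Submodule.mem_span_singleton_self _)
  have h2 : basisDeg 2 = 0 := by simp [basisDeg]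
  have hj' := basisDeg_of_three_le hj
  have h₁ : coordL p 2 x * coordL p j y = 0 := by
    by_cases ha : a = 0
    · rw [coordL_eq_zero_of_mem_gr (by omega) hy (by omega), mul_zero]
    · rw [coordL_eq_zero_of_mem_gr (by norm_num) hx (by omega), zero_mul]
  have h₂ : coordL p j x * coordL p 2 y = 0 := by
    by_cases ha : a = 1
    · rw [coordL_eq_zero_of_mem_gr (by norm_num) hy (by omega), mul_zero]
    · rw [coordL_eq_zero_of_mem_gr (by omega) hx (by omega), zero_mul]
  simp [h₁, h₂]

lemma psiTop_apply_X_two_X {p j k : ℕ} (hj : 3 ≤ j) (hjp : j ≤ 2 * p) (hk : 3 ≤ k) :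
    psiTop p j (X p 2) (X p k) = if j = k then X p 1 else 0 := by
  simp (disch := omega) [psiTop, elem_apply, coordL_X (a := 2), coordL_X (a := j),
    show j ≠ 2 by omega, show 2 ≠ k by omega]

section DegreeOne

variable {p : ℕ} {ψ : V p → V p → V p}

lemma exists_apply_X_two_eq_smul (hψ : ψ ∈ degF p 1) {j : ℕ} (hj : 3 ≤ j) (hjp : j ≤ 2 * p) :
    ∃ c : ℂ, ψ (X p 2) (X p j) = c • X p 1 := by
  have hmem := hψ 0 1 _ (X_mem_gr_basisDeg (j := 2) (by norm_num) (by omega)) _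
    (basisDeg_of_three_le hj ▸ X_mem_gr_basisDeg (by omega) hjp)
  obtain ⟨c, hc⟩ := Submodule.mem_span_singleton.mp (by simpa [gr] using hmem)
  exact ⟨c, hc.symm⟩

lemma apply_X_X_eq_zero_of_mem_degF (hψ : ψ ∈ degF p 1) (halt : ∀ x, ψ x x = 0) {a b : ℕ}
    (ha : 1 ≤ a) (hap : a ≤ 2 * p) (hb : 1 ≤ b) (hbp : b ≤ 2 * p)
    (h : ¬(a = 2 ∧ 3 ≤ b)) (h' : ¬(3 ≤ a ∧ b = 2)) : ψ (X p a) (X p b) = 0 := by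
  obtain rfl | hne := eq_or_ne a b
  · exact halt _
  have hmem := hψ _ _ _ (X_mem_gr_basisDeg ha hap) _ (X_mem_gr_basisDeg hb hbp)
  rwa [gr_eq_bot, Submodule.mem_bot] at hmem <;> unfold basisDeg <;> split_ifs <;> omega

lemma eq_zero_of_apply_X_two_eq_zero (hbil : IsBil p ψ) (halt : ∀ x, ψ x x = 0)
    (hψ : ψ ∈ degF p 1) (h : ∀ j, 3 ≤ j → j ≤ 2 * p → ψ (X p 2) (X p j) = 0) : ψ = 0 := by
  let B : Bil p := LinearMap.mk₂ ℂ ψ hbil.1 hbil.2.1 hbil.2.2.1 hbil.2.2.2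
  suffices B = 0 from funext fun x => funext fun y => LinearMap.congr_fun₂ this x y
  refine (Pi.basisFun ℂ _).ext fun i => (Pi.basisFun ℂ _).ext fun k => ?_
  simp only [Pi.basisFun_apply, ← X_eq_single, B, LinearMap.mk₂_apply, LinearMap.zero_apply]
  have hi := i.isLt
  have hk := k.isLt
  by_cases h₁ : (i : ℕ) + 1 = 2 ∧ 3 ≤ (k : ℕ) + 1
  · rw [h₁.1]
    exact h _ h₁.2 (by omega)
  by_cases h₂ : 3 ≤ (i : ℕ) + 1 ∧ (k : ℕ) + 1 = 2
  · rw [hbil.apply_swap halt, h₂.2, h _ h₂.1 (by omega), neg_zero]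
  exact apply_X_X_eq_zero_of_mem_degF hψ halt (by omega) (by omega) (by omega) (by omega) h₁ h₂

end DegreeOne

def psiTopSet (p : ℕ) : Set (V p → V p → V p) :=
  {ψ | ∃ j, 3 ≤ j ∧ j ≤ 2 * p ∧ ψ = toF p (psiTop p j)}

lemma span_psiTopSet_le {p : ℕ} (φ : ℕ → ℂ) :
    Submodule.span ℂ (psiTopSet p) ≤ Z2F p φ ⊓ degF p 1 := by
  rw [Submodule.span_le]
  rintro _ ⟨j, hj, hjp, rfl⟩
  exact ⟨psiTop_mem_Z2F φ hj hjp, psiTop_mem_degF hj⟩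

lemma le_span_psiTopSet {p : ℕ} (φ : ℕ → ℂ) :
    Z2F p φ ⊓ degF p 1 ≤ Submodule.span ℂ (psiTopSet p) := by
  rintro ψ ⟨hZ, hdeg⟩
  have hcoef : ∀ j, ∃ c : ℂ, 3 ≤ j → j ≤ 2 * p → ψ (X p 2) (X p j) = c • X p 1 := by
    intro j
    by_cases hj : 3 ≤ j ∧ j ≤ 2 * p
    · obtain ⟨c, hc⟩ := exists_apply_X_two_eq_smul hdeg hj.1 hj.2
      exact ⟨c, fun _ _ => hc⟩
    · exact ⟨0, fun h h' => absurd ⟨h, h'⟩ hj⟩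
  choose c hc using hcoef
  set ψ' := ∑ j ∈ Finset.Icc 3 (2 * p), c j • toF p (psiTop p j)
  have hψ' : ψ' ∈ Submodule.span ℂ (psiTopSet p) := Submodule.sum_mem _ fun j hj =>
    Submodule.smul_mem _ _ (Submodule.subset_span ⟨j, by simp_all, by simp_all, rfl⟩)
  have hdiff : ψ - ψ' ∈ Z2F p φ ⊓ degF p 1 := sub_mem ⟨hZ, hdeg⟩ (span_psiTopSet_le φ hψ')
  suffices ψ - ψ' = 0 by rwa [sub_eq_zero.mp this]
  refine eq_zero_of_apply_X_two_eq_zero hdiff.1.1 hdiff.1.2.1 hdiff.2 fun k hk hkp => ?_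
  have hsum : ∑ j ∈ Finset.Icc 3 (2 * p), c j • psiTop p j (X p 2) (X p k) = c k • X p 1 := by
    rw [Finset.sum_congr rfl fun j hj => by
      rw [psiTop_apply_X_two_X (Finset.mem_Icc.mp hj).1 (Finset.mem_Icc.mp hj).2 hk, smul_ite,
        smul_zero]]
    simp [hk, hkp]
  simp only [Pi.sub_apply, ψ', Finset.sum_apply, Pi.smul_apply, toF, hsum, hc k hk hkp, sub_self]

lemma psiTopSet_eq_range (p : ℕ) :
    psiTopSet p = Set.range fun j : Finset.Icc 3 (2 * p) => toF p (psiTop p j) := by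
  ext ψ
  simp only [psiTopSet, Set.mem_ofPred_eq, Set.mem_range, Subtype.exists, Finset.mem_Icc]
  grind

lemma linearIndependent_psiTop (p : ℕ) :
    LinearIndependent ℂ fun j : Finset.Icc 3 (2 * p) => toF p (psiTop p j) := by
  rw [Fintype.linearIndependent_iff]
  intro g hg k
  have hk := Finset.mem_Icc.mp k.2
  have hval : ∀ j : Finset.Icc 3 (2 * p),
      coordL p 1 (psiTop p j (X p 2) (X p k)) = if j = k then 1 else 0 := by
    intro j
    have hj := Finset.mem_Icc.mp j.2
    rw [psiTop_apply_X_two_X hj.1 hj.2 hk.1]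
    by_cases hjk : j = k
    · simp [hjk, coordL_X (a := 1) le_rfl (by omega : 1 ≤ 2 * p)]
    · simp [hjk, Subtype.coe_injective.ne hjk]
  have h := congrArg (fun ψ => coordL p 1 (ψ (X p 2) (X p k))) hg
  simpa [toF, Finset.sum_apply, hval] using h

theorem stmt14_general (p : ℕ) (φ : ℕ → ℂ) :
    Module.finrank ℂ ↥(Z2F p φ ⊓ degF p 1) = 2*(p-1) ∧
    Z2F p φ ⊓ degF p 1
      = Submodule.span ℂ
          {ψ : V p → V p → V p | ∃ j, 3 ≤ j ∧ j ≤ 2*p ∧ ψ = toF p (psiTop p j)} := by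
  have hspan : Z2F p φ ⊓ degF p 1 = Submodule.span ℂ (psiTopSet p) :=
    le_antisymm (le_span_psiTopSet φ) (span_psiTopSet_le φ)
  refine ⟨?_, hspan⟩
  rw [hspan, psiTopSet_eq_range, finrank_span_eq_card (linearIndependent_psiTop p)]
  rw [Fintype.card_coe, Nat.card_Icc]
  omega

/-- if `φ` avoids `Ω` then `dim Z²_1 = 2(p−1)`, spanned by the
cochains `ψ^1_{2,j}` (`3 ≤ j ≤ 2p`), `ψ^1_{2,j}(X_2, X_j) = X_1`. -/
theorem stmt14 (p : ℕ) (hp : 2 ≤ p) (φ : ℕ → ℂ) (hΩ : AvoidsOmega p φ) :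
    Module.finrank ℂ ↥(Z2F p φ ⊓ degF p 1) = 2*(p-1) ∧
    Z2F p φ ⊓ degF p 1
      = Submodule.span ℂ
          {ψ : V p → V p → V p | ∃ j, 3 ≤ j ∧ j ≤ 2*p ∧ ψ = toF p (psiTop p j)} :=
  stmt14_general p φ
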